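/- Define a function E_G on finite lists of real numbers in (0,1) recursively by: E_G([]) = 0; E_G([q]) = 1; and for a list with first two entries q_1, q_2 followed by a (possibly empty) list R, writing a = max(q_1,q_2) and b = min(q_1,q_2), E_G(q_1 :: q_2 :: R) = q_1·q_2·(1 + E_G(R)) + a·(1 − b)·(2 + E_G(R)) + (1 − a)·(2 + E_G(b :: R)). Then E_G([0.68, 0.62, 0.65, 0.62]) < E_G([0.68, 0.65, 0.62, 0.62]). That is, for four units with good-probabilities {0.62, 0.62, 0.65, 0.68}, the generalized pairwise testing algorithm applied in the order 0.68, 0.62, 0.65, 0.62 has strictly smaller expected number of tests than the same algorithm applied in the decreasing order 0.68, 0.65, 0.62, 0.62; hence the ordered (sorted) testing order is not optimal for the generalized pairwise testing algorithm. -/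

import Mathlib

/-!
In both orders the unit `0.68` is paired first, and if it turns out defective the remaining
lists `[0.65, 0.62, 0.62]` and `[0.62, 0.65, 0.62]` cost the same, since `EG` is symmetric in
its first two entries. The comparison therefore reduces to the two-unit costs
`EG [q₁, q₂] = 3 - max q₁ q₂ - q₁ q₂` of the lists left once the first pair is classified.
-/

/-- Expected number of tests of the generalized pairwise testing algorithm (GPTA)
applied to a list of good-probabilities in the given order. -/
noncomputable def EG : List ℝ → ℝ
  | [] => 0
  | [_] => 1
  | q₁ :: q₂ :: R =>
      q₁ * q₂ * (1 + EG R) + max q₁ q₂ * (1 - min q₁ q₂) * (2 + EG R)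
        + (1 - max q₁ q₂) * (2 + EG (min q₁ q₂ :: R))
termination_by L => L.length

namespace EG

@[simp]
theorem nil : EG [] = 0 := by
  rw [EG]

@[simp]
theorem singleton (q : ℝ) : EG [q] = 1 := by
  rw [EG]

theorem cons_cons_of_le {q₁ q₂ : ℝ} (h : q₂ ≤ q₁) (R : List ℝ) :
    EG (q₁ :: q₂ :: R) =
      q₁ * q₂ * (1 + EG R) + q₁ * (1 - q₂) * (2 + EG R) + (1 - q₁) * (2 + EG (q₂ :: R)) := by
  rw [EG, max_eq_left h, min_eq_right h]

theorem cons_cons_comm (q₁ q₂ : ℝ) (R : List ℝ) :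
    EG (q₁ :: q₂ :: R) = EG (q₂ :: q₁ :: R) := by
  rw [EG, EG, mul_comm q₁ q₂, max_comm, min_comm]

theorem pair (q₁ q₂ : ℝ) : EG [q₁, q₂] = 3 - max q₁ q₂ - q₁ * q₂ := by
  rw [EG, singleton, nil, ← min_mul_max q₁ q₂]
  ring

end EG

/-- The sorted (decreasing) testing order is not optimal for GPTA: for good-probabilities
`{0.62, 0.62, 0.65, 0.68}`, the order `0.68, 0.62, 0.65, 0.62` is strictly better
than the decreasing order `0.68, 0.65, 0.62, 0.62`. -/
theorem stmt_6 :
    EG [0.68, 0.62, 0.65, 0.62] < EG [0.68, 0.65, 0.62, 0.62] := by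
  rw [EG.cons_cons_of_le (by norm_num : (0.62 : ℝ) ≤ 0.68),
    EG.cons_cons_of_le (by norm_num : (0.65 : ℝ) ≤ 0.68),
    EG.cons_cons_comm 0.62 0.65, EG.pair, EG.pair]
  gcongr ?_ + _
  norm_num
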